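/- arXiv:1601.07099 — 5 statements merged into one kernel-verified Lean document; each statement's English description precedes it below -/
import Mathlib

section
/- Assume Dickson's conjecture (D). Let f_i(x) = a_i·x + b_i for i < k and g_j(x) = c_j·x + d_j for j < k', all with integer coefficients and a_i, c_j ≥ 1. If the family (f_i) satisfies condition (⋆) and (a_i, b_i) ≠ (c_j, d_j) for all i, j, then there are infinitely many natural numbers m such that f_i(m) is prime for all i < k and g_j(m) is composite (not prime) for all j < k'. -/
/-!
Induction on the number of forms `g`. To add `g = c x + d`, there are two cases.
If `a i * d = b i * c` for some `i`, then, as (⋆) forces `gcd (a i) (b i) = 1`, `g = u f_i`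
with `u ≥ 2` (since `g ≠ f_i`), so `g(m)` is composite whenever `f_i(m)` is prime.
Otherwise take a prime `p` dividing neither `c` nor any resultant `a i * d - b i * c`, and `r`
with `p ∣ g(r)`; then `p ∤ f_i(r)`, so the forms `t ↦ f_i(p t + r)` still satisfy (⋆), and
the induction hypothesis for the substituted families yields infinitely many `t` for which
`g(p t + r)`, a multiple of `p` larger than `p`, is composite as well.
-/

open Finset

def Admissible (k : ℕ) (a b : ℕ → ℤ) : Prop :=
  ¬ ∃ n : ℤ, 1 < n ∧ ∀ s : ℤ, n ∣ ∏ i ∈ range k, (a i * s + b i)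

def DicksonConjecture : Prop :=
  ∀ (k : ℕ) (a b : ℕ → ℤ), (∀ i < k, 1 ≤ a i) → Admissible k a b →
    {m : ℕ | ∀ i < k, Prime (a i * m + b i)}.Infinite

def primeCompositeSet (k k' : ℕ) (a b c d : ℕ → ℤ) : Set ℕ :=
  {m : ℕ | (∀ i < k, Prime (a i * m + b i)) ∧ ∀ j < k', ¬ Prime (c j * m + d j)}

namespace Int

lemma not_prime_mul_of_two_le {u z : ℤ} (hu : 2 ≤ u) (hz : Prime z) : ¬ Prime (u * z) := by
  rw [prime_iff_natAbs_prime, natAbs_mul]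
  exact Nat.not_prime_mul (by omega) (prime_iff_natAbs_prime.mp hz).ne_one

lemma not_prime_of_dvd_of_lt {p z : ℤ} (hp : 1 < p) (hpz : p ∣ z) (hlt : p < z) :
    ¬ Prime z := by
  rw [prime_iff_natAbs_prime]
  intro hz
  rcases hz.eq_one_or_self_of_dvd _ (natAbs_dvd_natAbs.mpr hpz) with h | h <;> omega

lemma exists_eq_mul_of_mul_eq_mul {a b c d : ℤ} (hab : IsCoprime a b) (ha : a ≠ 0)
    (h : a * d = b * c) : ∃ u, c = u * a ∧ d = u * b := by
  obtain ⟨u, rfl⟩ := hab.dvd_of_dvd_mul_left ⟨d, h.symm⟩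
  refine ⟨u, mul_comm a u, mul_left_cancel₀ ha ?_⟩
  linear_combination h

lemma exists_natCast_dvd_mul_add {p : ℕ} (hp : p.Prime) {c : ℤ} (hc : ¬ (p : ℤ) ∣ c) (d : ℤ) :
    ∃ r : ℕ, (p : ℤ) ∣ c * r + d := by
  have := Fact.mk hp
  have hc' : (c : ZMod p) ≠ 0 := by rwa [Ne, ZMod.intCast_zmod_eq_zero_iff_dvd]
  refine ⟨(-d / c : ZMod p).val, (ZMod.intCast_zmod_eq_zero_iff_dvd _ p).mp ?_⟩
  push_cast
  rw [ZMod.natCast_zmod_val]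
  field_simp
  ring

end Int

lemma exists_prime_dvd_and_forall_not_dvd {k : ℕ} {a b : ℕ → ℤ} {c d : ℤ} (hc : c ≠ 0)
    (hres : ∀ i < k, a i * d ≠ b i * c) :
    ∃ p r : ℕ, p.Prime ∧ (p : ℤ) ∣ c * r + d ∧ ∀ i < k, ¬ (p : ℤ) ∣ a i * r + b i := by
  set N := c * ∏ i ∈ range k, (a i * d - b i * c)
  have hN : N ≠ 0 := mul_ne_zero hc <| prod_ne_zero_iff.mpr fun i hi =>
    sub_ne_zero.mpr (hres i (mem_range.mp hi))
  obtain ⟨p, hpN, hp⟩ := Nat.exists_infinite_primes (N.natAbs + 1)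
  have hpN : ¬ (p : ℤ) ∣ N := fun h =>
    hN (Int.eq_zero_of_dvd_of_natAbs_lt_natAbs h (by simpa using hpN))
  obtain ⟨r, hr⟩ := Int.exists_natCast_dvd_mul_add hp (fun h => hpN (h.mul_right _)) d
  refine ⟨p, r, hp, hr, fun i hi hdvd => hpN (dvd_mul_of_dvd_right ?_ c)⟩
  have hcomb : a i * d - b i * c = a i * (c * r + d) - c * (a i * r + b i) := by ring
  exact (hcomb ▸ dvd_sub (hr.mul_left _) (hdvd.mul_left _)).trans
    (dvd_prod_of_mem _ (mem_range.mpr hi))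

section

variable {k : ℕ} {a b : ℕ → ℤ}

lemma Admissible.isCoprime (h : Admissible k a b) {i : ℕ} (hi : i < k) :
    IsCoprime (a i) (b i) := by
  rw [Int.isCoprime_iff_gcd_eq_one]
  by_contra hg
  have hq := Nat.minFac_prime hg
  have hqg : (((a i).gcd (b i)).minFac : ℤ) ∣ (a i).gcd (b i) :=
    Int.natCast_dvd_natCast.mpr (Nat.minFac_dvd _)
  refine h ⟨_, Nat.one_lt_cast.mpr hq.one_lt, fun s => ?_⟩
  have hqa := hqg.trans (Int.gcd_dvd_left _ _)
  have hqb := hqg.trans (Int.gcd_dvd_right _ _)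
  exact (dvd_add (hqa.mul_right s) hqb).trans (dvd_prod_of_mem _ (mem_range.mpr hi))

lemma Admissible.exists_two_le_eq_mul (h : Admissible k a b) {i : ℕ} (hi : i < k)
    (ha : 1 ≤ a i) {c d : ℤ} (hc : 1 ≤ c) (hne : (a i, b i) ≠ (c, d)) (hcd : a i * d = b i * c) :
    ∃ u, 2 ≤ u ∧ c = u * a i ∧ d = u * b i := by
  obtain ⟨u, hcu, hdu⟩ := Int.exists_eq_mul_of_mul_eq_mul (h.isCoprime hi) (by omega) hcd
  have hu_pos : 0 < u := pos_of_mul_pos_left (hcu ▸ hc : 0 < u * a i) (by omega)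
  have hu_ne_one : u ≠ 1 := by
    rintro rfl
    exact hne (by rw [hcu, hdu, one_mul, one_mul])
  exact ⟨u, by omega, hcu, hdu⟩

lemma admissible_iff_forall_prime : Admissible k a b ↔
    ∀ q : ℕ, q.Prime → ∃ x : ZMod q, ∏ i ∈ range k, ((a i : ZMod q) * x + b i) ≠ 0 := by
  constructor
  · intro h q hq
    by_contra! hall
    refine h ⟨q, Nat.one_lt_cast.mpr hq.one_lt, fun s => ?_⟩
    rw [← ZMod.intCast_zmod_eq_zero_iff_dvd]
    push_cast
    exact hall s
  · rintro h ⟨n, hn, hdvd⟩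
    have hq := Nat.minFac_prime (show n.natAbs ≠ 1 by omega)
    obtain ⟨x, hx⟩ := h _ hq
    obtain ⟨s, rfl⟩ := ZMod.intCast_surjective x
    have hqn : ((n.natAbs.minFac : ℕ) : ℤ) ∣ n :=
      Int.natCast_dvd.mpr (Nat.minFac_dvd _)
    apply hx
    have := (ZMod.intCast_zmod_eq_zero_iff_dvd _ _).mpr (hqn.trans (hdvd s))
    push_cast at this
    exact this

lemma Admissible.comp_affine (h : Admissible k a b) {p r : ℕ} (hp : p.Prime)
    (hr : ∀ i < k, ¬ (p : ℤ) ∣ a i * r + b i) :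
    Admissible k (fun i => a i * p) (fun i => a i * r + b i) := by
  rw [admissible_iff_forall_prime] at h ⊢
  intro q hq
  have := Fact.mk hq
  by_cases hqp : q = p
  · subst hqp
    refine ⟨0, prod_ne_zero_iff.mpr fun i hi => ?_⟩
    have := hr i (mem_range.mp hi)
    rw [← ZMod.intCast_zmod_eq_zero_iff_dvd] at this
    push_cast at this
    simpa using this
  · obtain ⟨x, hx⟩ := h q hq
    have hp0 : (p : ZMod q) ≠ 0 := fun h0 =>
      hqp ((Nat.prime_dvd_prime_iff_eq hq hp).mp ((ZMod.natCast_eq_zero_iff _ _).mp h0))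
    refine ⟨(x - r) / p, ?_⟩
    convert hx using 2 with i
    push_cast
    field_simp
    ring

end

section

variable {k k' : ℕ} {a b c d : ℕ → ℤ}

lemma primeCompositeSet_subset_succ_of_eq_mul {i : ℕ} (hi : i < k) {u : ℤ} (hu : 2 ≤ u)
    (hc : c k' = u * a i) (hd : d k' = u * b i) :
    primeCompositeSet k k' a b c d ⊆ primeCompositeSet k (k' + 1) a b c d := by
  rintro m ⟨hf, hg⟩
  refine ⟨hf, fun j hj => ?_⟩
  rcases Nat.lt_succ_iff_lt_or_eq.mp hj with hj | rfl
  · exact hg j hj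
  · rw [hc, hd, show u * a i * m + u * b i = u * (a i * m + b i) by ring]
    exact Int.not_prime_mul_of_two_le hu (hf i hi)

lemma mem_primeCompositeSet_comp_affine {p r t : ℕ} :
    t ∈ primeCompositeSet k k' (fun i => a i * p) (fun i => a i * r + b i)
      (fun j => c j * p) (fun j => c j * r + d j) ↔
    p * t + r ∈ primeCompositeSet k k' a b c d := by
  have (x y : ℤ) : x * p * t + (x * r + y) = x * ((p * t + r : ℕ) : ℤ) + y := by push_cast; ring
  simp only [primeCompositeSet, Set.mem_ofPred_eq, this]

lemma primeCompositeSet_comp_affine_subset {p r : ℕ} (hp : p.Prime) (hc : 1 ≤ c k')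
    (hpr : (p : ℤ) ∣ c k' * r + d k') :
    (fun t => p * t + r) '' primeCompositeSet k k' (fun i => a i * p) (fun i => a i * r + b i)
        (fun j => c j * p) (fun j => c j * r + d j) \ Set.Iic (p + (d k').natAbs) ⊆
      primeCompositeSet k (k' + 1) a b c d := by
  rintro _ ⟨⟨t, ht, rfl⟩, hlarge⟩
  obtain ⟨hf, hg⟩ := mem_primeCompositeSet_comp_affine.mp ht
  refine ⟨hf, fun j hj => ?_⟩
  rcases Nat.lt_succ_iff_lt_or_eq.mp hj with hj | rfl
  · exact hg j hj
  · have hlarge : ((p + (d j).natAbs : ℕ) : ℤ) < ((p * t + r : ℕ) : ℤ) := by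
      exact_mod_cast not_le.mp hlarge
    push_cast at hlarge ⊢
    refine Int.not_prime_of_dvd_of_lt (Nat.one_lt_cast.mpr hp.one_lt) ?_ ?_
    · rw [show c j * (p * t + r) + d j = p * (c j * t) + (c j * r + d j) by ring]
      exact dvd_add (dvd_mul_right _ _) hpr
    · have : (p * t + r : ℤ) ≤ c j * (p * t + r) :=
        le_mul_of_one_le_left (by positivity) hc
      linarith [neg_abs_le (d j)]

end

theorem DicksonConjecture.primeCompositeSet_infinite (hD : DicksonConjecture) {k k' : ℕ}
    {a b c d : ℕ → ℤ} (ha : ∀ i < k, 1 ≤ a i) (hc : ∀ j < k', 1 ≤ c j)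
    (hadm : Admissible k a b) (hne : ∀ i < k, ∀ j < k', (a i, b i) ≠ (c j, d j)) :
    (primeCompositeSet k k' a b c d).Infinite := by
  induction k' generalizing a b c d with
  | zero =>
    exact (hD k a b ha hadm).mono fun m hm => ⟨hm, fun j hj => absurd hj j.not_lt_zero⟩
  | succ k' ih =>
    have hc' : ∀ j < k', 1 ≤ c j := fun j hj => hc j (by omega)
    have hne' : ∀ i < k, ∀ j < k', (a i, b i) ≠ (c j, d j) := fun i hi j hj => hne i hi j (by omega)
    have hck : 1 ≤ c k' := hc k' k'.lt_succ_self
    by_cases hres : ∃ i < k, a i * d k' = b i * c k'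
    · obtain ⟨i, hi, hres⟩ := hres
      obtain ⟨u, hu, hcu, hdu⟩ :=
        hadm.exists_two_le_eq_mul hi (ha i hi) hck (hne i hi k' k'.lt_succ_self) hres
      exact (ih ha hc' hadm hne').mono (primeCompositeSet_subset_succ_of_eq_mul hi hu hcu hdu)
    · push Not at hres
      obtain ⟨p, r, hp, hpr, hpf⟩ := exists_prime_dvd_and_forall_not_dvd (by omega) hres
      have hp0 : (0 : ℤ) < p := by exact_mod_cast hp.pos
      have hne_comp : ∀ i < k, ∀ j < k',
          (a i * p, a i * r + b i) ≠ (c j * p, c j * r + d j) := by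
        intro i hi j hj h
        obtain ⟨hac, hbd⟩ := Prod.mk.inj h
        have hac : a i = c j := mul_right_cancel₀ hp0.ne' hac
        rw [hac] at hbd
        exact hne' i hi j hj (by rw [hac, add_left_cancel hbd])
      have hT := ih (fun i hi => one_le_mul_of_one_le_of_one_le (ha i hi) hp0)
        (fun j hj => one_le_mul_of_one_le_of_one_le (hc' j hj) hp0) (hadm.comp_affine hp hpf)
        hne_comp
      have hinj : (fun t => p * t + r).Injective := fun s t h =>
        Nat.eq_of_mul_eq_mul_left hp.pos (Nat.add_right_cancel h)
      exact ((hT.image hinj.injOn).sdiff (Set.finite_Iic _)).mono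
        (primeCompositeSet_comp_affine_subset hp hck hpr)

/-- Assuming Dickson's conjecture, one can simultaneously make the f_i prime and
the g_j non-prime for infinitely many natural numbers. -/
theorem dickson_prime_and_composite
    (hD : ∀ (k : ℕ) (a b : ℕ → ℤ), (∀ i < k, 1 ≤ a i) →
      (¬ ∃ n : ℤ, 1 < n ∧ ∀ s : ℤ, n ∣ ∏ i ∈ Finset.range k, (a i * s + b i)) →
      {m : ℕ | ∀ i < k, Prime (a i * m + b i)}.Infinite)
    (k k' : ℕ) (a b c d : ℕ → ℤ)
    (ha : ∀ i < k, 1 ≤ a i) (hc : ∀ j < k', 1 ≤ c j)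
    (hstar : ¬ ∃ n : ℤ, 1 < n ∧ ∀ s : ℤ, n ∣ ∏ i ∈ Finset.range k, (a i * s + b i))
    (hne : ∀ i < k, ∀ j < k', (a i, b i) ≠ (c j, d j)) :
    {m : ℕ | (∀ i < k, Prime (a i * m + b i)) ∧
      ∀ j < k', ¬ Prime (c j * m + d j)}.Infinite :=
  DicksonConjecture.primeCompositeSet_infinite hD ha hc hstar hne
end

section
/- Let f_i(x) = a_i·x + b_i for i < k, with integer coefficients and a_i ≥ 1. If there are more than 2k integers m such that |f_i(m)| is prime for every i < k, then condition (⋆) holds: no integer n > 1 divides ∏_{i<k} f_i(s) for all integers s. -/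
/-!
If a prime `p` divides `∏ i < k, (a i * s + b i)` for every `s`, then at each `m` where all the
values `|a i * m + b i|` are prime, one of them equals `p`. A nonconstant linear polynomial takes
each of the values `±p` at most once, so at most `2 * k` integers `m` have all values prime.
-/

open Finset

lemma Int.natAbs_eq_natAbs_of_prime_dvd {p x : ℤ} (hp : Prime p) (hpx : p ∣ x)
    (hx : x.natAbs.Prime) : x.natAbs = p.natAbs :=
  ((Nat.prime_dvd_prime_iff_eq (Int.prime_iff_natAbs_prime.mp hp) hx).mp
    (Int.natAbs_dvd_natAbs.mpr hpx)).symm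

lemma card_filter_natAbs_linear_eq_le_two {a : ℤ} (ha : a ≠ 0) (b : ℤ) (q : ℕ) (S : Finset ℤ) :
    #{m ∈ S | (a * m + b).natAbs = q} ≤ 2 := by
  have hmaps : ∀ m ∈ {m ∈ S | (a * m + b).natAbs = q},
      a * m + b ∈ ({(q : ℤ), -(q : ℤ)} : Finset ℤ) := by
    intro m hm
    rw [mem_filter] at hm
    simpa using Int.natAbs_eq_iff.mp hm.2
  have hinj : Set.InjOn (fun m => a * m + b) ({m ∈ S | (a * m + b).natAbs = q} : Finset ℤ) :=
    fun m _ m' _ h => mul_left_cancel₀ ha (add_right_cancel h)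
  exact (card_le_card_of_injOn _ hmaps hinj).trans card_le_two

lemma card_le_two_mul_of_prime_dvd_prod {k : ℕ} {a : ℕ → ℤ} (ha : ∀ i < k, a i ≠ 0) (b : ℕ → ℤ)
    {p : ℤ} (hp : Prime p) {S : Finset ℤ}
    (hprime : ∀ m ∈ S, ∀ i < k, (a i * m + b i).natAbs.Prime)
    (hdvd : ∀ m ∈ S, p ∣ ∏ i ∈ range k, (a i * m + b i)) :
    #S ≤ 2 * k := by
  have hcover : S ⊆ (range k).biUnion fun i => {m ∈ S | (a i * m + b i).natAbs = p.natAbs} := by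
    intro m hm
    obtain ⟨i, hi, hpi⟩ := hp.exists_mem_finset_dvd (hdvd m hm)
    exact mem_biUnion.mpr ⟨i, hi, mem_filter.mpr
      ⟨hm, Int.natAbs_eq_natAbs_of_prime_dvd hp hpi (hprime m hm i (mem_range.mp hi))⟩⟩
  calc #S ≤ ∑ i ∈ range k, #{m ∈ S | (a i * m + b i).natAbs = p.natAbs} :=
        (card_le_card hcover).trans card_biUnion_le
    _ ≤ ∑ _i ∈ range k, 2 :=
        sum_le_sum fun i hi => card_filter_natAbs_linear_eq_le_two
          (ha i (mem_range.mp hi)) (b i) _ S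
    _ = 2 * k := by rw [sum_const, card_range, smul_eq_mul, mul_comm]

/-- If more than 2k integers m make all |a i * m + b i| prime, then condition (⋆) holds. -/
theorem many_prime_values_implies_star (k : ℕ) (a b : ℕ → ℤ) (ha : ∀ i < k, 1 ≤ a i)
    (h : ∃ S : Finset ℤ, 2 * k < S.card ∧
      ∀ m ∈ S, ∀ i < k, Nat.Prime (a i * m + b i).natAbs) :
    ¬ ∃ n : ℤ, 1 < n ∧ ∀ s : ℤ, n ∣ ∏ i ∈ Finset.range k, (a i * s + b i) := by
  rintro ⟨n, hn, hdvd⟩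
  obtain ⟨S, hcard, hprime⟩ := h
  obtain ⟨p, hp, hpn⟩ := Int.exists_prime_and_dvd (show n.natAbs ≠ 1 by omega)
  have hle : #S ≤ 2 * k :=
    card_le_two_mul_of_prime_dvd_prod (fun i hi => (one_pos.trans_le (ha i hi)).ne')
      b hp hprime fun m _ => hpn.trans (hdvd m)
  omega
end

section
/- Assume Dickson's conjecture (D). Let f_i(x) = a_i·x + b_i (i < k, integers a_i ≥ 1, b_i) satisfy condition (⋆), and let K be the product of all primes p < N where N = max({a_i : i < k} ∪ {k}) + 1. Then for every ℓ ∈ ℕ, the shifted family f'_i(x) = a_i·x + (a_i·ℓ·K + b_i) also satisfies condition (⋆). -/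
open Finset

/- Shifting the constant terms to `a i * c + b i` is the substitution `x ↦ x + c`, a bijection
of the ring, so the set of common divisors of all values of the product does not change. -/

theorem prod_linear_shift_eq {ι R : Type*} [CommRing R] (S : Finset ι) (a b : ι → R) (c s : R) :
    ∏ i ∈ S, (a i * s + (a i * c + b i)) = ∏ i ∈ S, (a i * (s + c) + b i) :=
  prod_congr rfl fun _ _ => by ring

theorem forall_dvd_prod_linear_shift_iff {ι R : Type*} [CommRing R] (S : Finset ι)
    (a b : ι → R) (c n : R) :
    (∀ s, n ∣ ∏ i ∈ S, (a i * s + (a i * c + b i))) ↔ ∀ s, n ∣ ∏ i ∈ S, (a i * s + b i) := by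
  simp only [prod_linear_shift_eq]
  exact ⟨fun h s => by simpa using h (s - c), fun h s => h (s + c)⟩

theorem star_preserved_under_shift_general
    (k : ℕ) (a b : ℕ → ℤ)
    (hstar : ¬ ∃ n : ℤ, 1 < n ∧ ∀ s : ℤ, n ∣ ∏ i ∈ Finset.range k, (a i * s + b i))
    (K : ℕ) :
    ∀ ℓ : ℕ, ¬ ∃ n : ℤ, 1 < n ∧
      ∀ s : ℤ, n ∣ ∏ i ∈ Finset.range k, (a i * s + (a i * ℓ * K + b i)) := by
  rintro ℓ ⟨n, hn, hdvd⟩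
  simp only [mul_assoc] at hdvd
  exact hstar ⟨n, hn, (forall_dvd_prod_linear_shift_iff _ a b _ n).1 hdvd⟩

/-- Shifting the constant terms by multiples of a_i·K, where K is the product of the
primes below N, preserves condition (⋆). -/
theorem star_preserved_under_shift
    (hD : ∀ (k : ℕ) (a b : ℕ → ℤ), (∀ i < k, 1 ≤ a i) →
      (¬ ∃ n : ℤ, 1 < n ∧ ∀ s : ℤ, n ∣ ∏ i ∈ Finset.range k, (a i * s + b i)) →
      {m : ℕ | ∀ i < k, Prime (a i * m + b i)}.Infinite)
    (k : ℕ) (a b : ℕ → ℤ) (ha : ∀ i < k, 1 ≤ a i)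
    (hstar : ¬ ∃ n : ℤ, 1 < n ∧ ∀ s : ℤ, n ∣ ∏ i ∈ Finset.range k, (a i * s + b i))
    (N K : ℕ)
    (hN : N = (((Finset.range k).sup fun i => (a i).toNat) ⊔ k) + 1)
    (hK : K = ∏ p ∈ (Finset.range N).filter Nat.Prime, p) :
    ∀ ℓ : ℕ, ¬ ∃ n : ℤ, 1 < n ∧
      ∀ s : ℤ, n ∣ ∏ i ∈ Finset.range k, (a i * s + (a i * ℓ * K + b i)) :=
  star_preserved_under_shift_general k a b hstar K
end

section
/- Assume that for all n ∈ ℕ and all subsets s ⊆ {0,...,n−1} there is an arithmetic progression (a·t + b)_{t<n} of natural numbers with a·t + b prime iff t ∈ s. Then for every n and k, the relation φ(x, y_1, ..., y_n) := 'x + y_1 + ⋯ + y_n is prime' on ℤ has the n-independence property: there exist integers a_{i,j} (i < n, j < k) such that for every subset s ⊆ k^n there is b_s ∈ ℤ with (x + a_{0,j_0} + ⋯ + a_{n−1,j_{n−1}} prime at x = b_s) ⟺ (j_0, ..., j_{n−1}) ∈ s. -/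
/-!
Enumerate the pairs `(s, j)` of a pattern `s ⊆ kⁿ` and a tuple `j ∈ kⁿ` as the positions
`j₀ + j₁ k + ⋯ + j_{n-1} k^{n-1} + kⁿ · index s` of a single progression `a t + c`, and choose it
so that `a t + c` is prime exactly at the positions with `j ∈ s`. With `a_{i,m} = a m kⁱ` and
`b_s = a kⁿ (index s) + c`, the sum `b_s + ∑ᵢ a_{i,jᵢ}` is the term of the progression at the
position of `(s, j)`.
-/

open Finset

theorem exists_nat_prime_iff_of_equiv
    (hAP : ∀ (n : ℕ) (s : Finset ℕ), s ⊆ Finset.range n →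
      ∃ a b : ℕ, 1 ≤ a ∧ ∀ t < n, (Nat.Prime (a * t + b) ↔ t ∈ s))
    {ι : Type*} {N : ℕ} (e : ι ≃ Fin N) (P : ι → Prop) :
    ∃ a c : ℕ, ∀ x, Nat.Prime (a * e x + c) ↔ P x := by
  classical
  obtain ⟨a, c, -, hac⟩ := hAP N ((univ.filter (P ∘ e.symm)).map Fin.valEmbedding)
    fun t ht => by
      obtain ⟨x, -, rfl⟩ := mem_map.1 ht
      exact mem_range.2 x.isLt
  exact ⟨a, c, fun x => by simp [hac _ (e x).isLt, Fin.val_inj]⟩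

theorem finFunctionFinEquiv_val_intCast {n k : ℕ} (j : Fin n → Fin k) :
    ((finFunctionFinEquiv j : ℕ) : ℤ) = ∑ i, (j i : ℤ) * (k : ℤ) ^ (i : ℕ) := by
  simp

/-- If every prime pattern occurs along an arithmetic progression, then the formula
"x + y₁ + ⋯ + yₙ is prime" has the n-independence property over ℤ. -/
theorem prime_sum_has_n_independence_property
    (hAP : ∀ (n : ℕ) (s : Finset ℕ), s ⊆ Finset.range n →
      ∃ a b : ℕ, 1 ≤ a ∧ ∀ t < n, (Nat.Prime (a * t + b) ↔ t ∈ s)) :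
    ∀ (n k : ℕ), ∃ a : Fin n → Fin k → ℤ,
      ∀ s : Set (Fin n → Fin k), ∃ b : ℤ,
        ∀ j : Fin n → Fin k, (Prime (b + ∑ i : Fin n, a i (j i)) ↔ j ∈ s) := by
  intro n k
  classical
  let index : Set (Fin n → Fin k) ≃ Fin _ := Fintype.equivFin _
  let position := (index.prodCongr (finFunctionFinEquiv (m := k) (n := n))).trans finProdFinEquiv
  obtain ⟨a, c, hac⟩ := exists_nat_prime_iff_of_equiv hAP position fun p => p.2 ∈ p.1
  refine ⟨fun i m => a * (m * k ^ (i : ℕ)), fun s => ⟨a * (k ^ n * index s) + c, fun j => ?_⟩⟩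
  have hsum : a * (k ^ n * index s) + c + ∑ i, (a : ℤ) * ((j i : ℕ) * k ^ (i : ℕ))
      = ((a * position (s, j) + c : ℕ) : ℤ) := by
    rw [← mul_sum, ← finFunctionFinEquiv_val_intCast]
    simp only [position, Equiv.trans_apply, Equiv.prodCongr_apply, Prod.map,
      finProdFinEquiv_apply_val]
    push_cast
    ring
  rw [hsum, ← Nat.prime_iff_prime_int, hac]
end

section
/- Assume: for all n and all s ⊆ {0,...,n−1} there exist a ≥ 1, b ∈ ℕ with (a·t + b prime ⟺ t ∈ s) for t < n. Then the formula 'x + y is prime' has the independence property over ℤ: for every k there exist integers a_0, ..., a_{k−1} such that for every subset s ⊆ {0,...,k−1} there exists b_s ∈ ℤ with (b_s + a_j prime ⟺ j ∈ s). -/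
/-!
Enumerate the pairs `(s, j)` of a block index `s` and a position `j < k` as `t = k * s + j`, and
take one progression `A * t + B` carrying the pattern `j ∈ s` on the whole range. Then
`A * t + B = (A * k * s + B) + A * j`, so the parameters `b_s = A * k * s + B` and `a_j = A * j`
realize every subset.
-/

open Finset

def RealizesAllPatternsOnAPs (Q : ℕ → Prop) : Prop :=
  ∀ (n : ℕ) (s : Finset ℕ), s ⊆ range n → ∃ a b : ℕ, ∀ t < n, (Q (a * t + b) ↔ t ∈ s)

namespace RealizesAllPatternsOnAPs

variable {Q : ℕ → Prop}

theorem exists_fin (hQ : RealizesAllPatternsOnAPs Q) {n : ℕ} (P : Fin n → Prop) :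
    ∃ a b : ℕ, ∀ t : Fin n, (Q (a * t + b) ↔ P t) := by
  classical
  have hsub : (univ.filter P).map Fin.valEmbedding ⊆ range n := by
    intro t ht
    obtain ⟨t, -, rfl⟩ := mem_map.mp ht
    exact mem_range.mpr t.isLt
  obtain ⟨a, b, hab⟩ := hQ n _ hsub
  exact ⟨a, b, fun t => by simpa [Fin.val_inj] using hab t t.isLt⟩

theorem exists_sum_iff (hQ : RealizesAllPatternsOnAPs Q) {σ : Type*} [Fintype σ] {k : ℕ}
    (R : σ → Fin k → Prop) :
    ∃ (a : Fin k → ℕ) (b : σ → ℕ), ∀ s j, (Q (b s + a j) ↔ R s j) := by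
  let e : σ ≃ Fin (Fintype.card σ) := Fintype.equivFin σ
  let enc : σ × Fin k ≃ Fin (Fintype.card σ * k) :=
    (e.prodCongr (Equiv.refl _)).trans finProdFinEquiv
  obtain ⟨A, B, hAB⟩ := hQ.exists_fin fun t => R (enc.symm t).1 (enc.symm t).2
  refine ⟨fun j => A * j, fun s => A * (k * e s) + B, fun s j => ?_⟩
  have henc : (enc (s, j) : ℕ) = j + k * e s := finProdFinEquiv_apply_val _
  have hsum : A * (k * e s) + B + A * j = A * enc (s, j) + B := by rw [henc]; ring
  simpa [hsum] using hAB (enc (s, j))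

end RealizesAllPatternsOnAPs

/-- If every prime pattern occurs along an arithmetic progression, then "x + y is prime"
has the independence property over ℤ. -/
theorem prime_sum_has_independence_property
    (hAP : ∀ (n : ℕ) (s : Finset ℕ), s ⊆ Finset.range n →
      ∃ a b : ℕ, 1 ≤ a ∧ ∀ t < n, (Nat.Prime (a * t + b) ↔ t ∈ s)) :
    ∀ k : ℕ, ∃ a : Fin k → ℤ, ∀ s : Finset (Fin k), ∃ b : ℤ,
      ∀ j : Fin k, (Prime (b + a j) ↔ j ∈ s) := by
  have hprime : RealizesAllPatternsOnAPs Nat.Prime := fun n s hs =>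
    (hAP n s hs).imp fun _ ⟨b, _, hb⟩ => ⟨b, hb⟩
  intro k
  obtain ⟨a, b, hab⟩ := hprime.exists_sum_iff fun (s : Finset (Fin k)) j => j ∈ s
  refine ⟨fun j => a j, fun s => ⟨b s, fun j => ?_⟩⟩
  rw [← hab s j, Nat.prime_iff_prime_int]
  push_cast
  rfl
end
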